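/- arXiv:1307.4390 — 2 statements merged into one kernel-verified Lean document; each statement's English description precedes it below -/
import Mathlib

section
/- Let N > 1 be a fundamental discriminant, χ_D = (N/·) the associated Kronecker symbol character mod N, k an integer, and for a positive divisor m of N let η_m = γ_m·[[N_m,0],[0,1]], where N_m is the m-part of N and γ_m ∈ SL₂(ℤ) satisfies γ_m ≡ S (mod N_m²) and γ_m ≡ I (mod (N/N_m)²). Then for f ∈ A(N,k,χ_D) and any positive divisor m of N, f|_k η_m² = χ_m(-1)·χ'_m(N_m)·f, where χ_m = Π_{p|m} χ_p and χ'_m = Π_{p|N, p∤m} χ_p is the complementary part of the decomposition χ_D = Π_p χ_p. -/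
noncomputable section

open Complex

/-- The upper half plane, as a subset of `ℂ`. -/
def UHP : Set ℂ := {z | 0 < z.im}

/-- Möbius action of a real 2×2 matrix on `ℂ`. -/
def moeb (M : Matrix (Fin 2) (Fin 2) ℝ) (z : ℂ) : ℂ :=
  ((M 0 0 : ℝ) * z + (M 0 1 : ℝ)) / ((M 1 0 : ℝ) * z + (M 1 1 : ℝ))

/-- The weight-`k` slash operator:
`(f|_k M)(τ) = det(M)^{k/2} (cτ+d)^{-k} f(Mτ)`. -/
def slash (k : ℤ) (M : Matrix (Fin 2) (Fin 2) ℝ) (f : ℂ → ℂ) : ℂ → ℂ :=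
  fun z => ((M.det ^ ((k : ℝ) / 2) : ℝ) : ℂ) *
    ((M 1 0 : ℝ) * z + (M 1 1 : ℝ)) ^ (-k) * f (moeb M z)

/-- Slash operator for an integral matrix. -/
def islash (k : ℤ) (M : Matrix (Fin 2) (Fin 2) ℤ) (f : ℂ → ℂ) : ℂ → ℂ :=
  slash k (M.map (Int.cast : ℤ → ℝ)) f

/-- The Kronecker symbol `(a/2)`. -/
def kron2 (a : ℤ) : ℤ :=
  if a % 2 = 0 then 0 else if a % 8 = 1 ∨ a % 8 = 7 then 1 else -1

/-- The Kronecker symbol `(a/n)`. -/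
def kron (a : ℤ) (n : ℤ) : ℤ :=
  if n = 0 then (if a = 1 ∨ a = -1 then 1 else 0)
  else
    (if n < 0 ∧ a < 0 then -1 else 1) *
    kron2 a ^ (n.natAbs.factorization 2) *
    jacobiSym a (n.natAbs / 2 ^ (n.natAbs.factorization 2))

/-- `N > 1` is a (positive) fundamental discriminant. -/
def IsFundDisc (N : ℤ) : Prop :=
  (N % 4 = 1 ∧ Squarefree N) ∨
    (∃ m : ℤ, N = 4 * m ∧ Squarefree m ∧ (m % 4 = 2 ∨ m % 4 = 3))

/-- The `p`-component `χ_p` of the character `χ_D = (N/·)` for a prime `p ∣ N`: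
for odd `p`, `χ_p = (·/p)` is the Legendre symbol; for `p = 2` it is the character from
the table, determined by `N₁ = N/4` modulo `8`. -/
def chiP (N : ℤ) (p : ℕ) : ℤ → ℤ := fun n =>
  if p = 2 then
    (if (N / 4) % 4 = 3 then kron (-4) n
     else if (N / 4) % 8 = 2 then kron 8 n
     else if (N / 4) % 8 = 6 then kron (-8) n
     else 1)
  else jacobiSym n p

/-- `χ_m = Π_{p ∣ m} χ_p`. -/
def chiPart (N : ℤ) (m : ℕ) : ℤ → ℤ := fun n => ∏ p ∈ m.primeFactors, chiP N p n

/-- `χ'_m = Π_{p ∣ N, p ∤ m} χ_p`. -/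
def chiCoPart (N : ℤ) (m : ℕ) : ℤ → ℤ := fun n =>
  ∏ p ∈ (N.natAbs.primeFactors \ m.primeFactors), chiP N p n

/-- `N_m`, the `m`-part of `N`: the largest divisor of `N` all of whose prime factors
divide `m`. -/
def Npart (N : ℤ) (m : ℕ) : ℕ :=
  ∏ p ∈ (N.natAbs.primeFactors ∩ m.primeFactors), p ^ (N.natAbs.factorization p)

/-- Congruence of integral matrices modulo `t`. -/
def CongMod (t : ℤ) (A B : Matrix (Fin 2) (Fin 2) ℤ) : Prop :=
  ∀ i j, t ∣ (A i j - B i j)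

/-- The matrix `η_m = γ_m · [[N_m, 0], [0, 1]]` (as a real matrix). -/
def etaMat (γ : Matrix (Fin 2) (Fin 2) ℤ) (t : ℕ) : Matrix (Fin 2) (Fin 2) ℝ :=
  (γ.map (Int.cast : ℤ → ℝ)) * !![(t : ℝ), 0; 0, 1]

/-- `f ∈ A(N, k, χ)`: weakly holomorphic modular form of level `N`, weight `k` and
character `χ`: holomorphic on the upper half plane, transforming under `Γ₀(N)` with
character `χ`, and meromorphic (at most exponential growth) at all cusps. -/
def IsWeaklyHol (N : ℕ) (k : ℤ) (χ : ℤ → ℤ) (f : ℂ → ℂ) : Prop :=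
  DifferentiableOn ℂ f UHP ∧
  (∀ M : Matrix (Fin 2) (Fin 2) ℤ, M.det = 1 → (N : ℤ) ∣ M 1 0 →
    ∀ z ∈ UHP, islash k M f z = (χ (M 1 1) : ℂ) * f z) ∧
  (∀ M : Matrix (Fin 2) (Fin 2) ℤ, M.det = 1 →
    ∃ C A B : ℝ, ∀ z ∈ UHP, B ≤ z.im → ‖islash k M f z‖ ≤ C * Real.exp (A * z.im))

/-! The matrix `η_m²` is `N_m` times the integral matrix
`M = γ_m · [[γ₀₀ N_m, γ₀₁], [γ₁₀, γ₁₁ / N_m]]`, which has determinant one and lies in `Γ₀(N)`;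
positive scalars act trivially, so `f |_k η_m² = χ_D(d) f` for the lower right entry `d` of `M`.
The congruences imposed on `γ_m` give `d ≡ -1 mod N_m²` and `N_m d ≡ 1 mod (N / N_m)²`.
Splitting `χ_D = ∏_p χ_p` (quadratic reciprocity), each `χ_p` is periodic modulo
`p ^ (2 v_p(N))`, so `χ_p(d) = χ_p(-1)` for `p ∣ m`, and `χ_p(d) = χ_p(N_m² d) = χ_p(N_m)`
for `p ∤ m`. -/

open ZMod

theorem kron_of_odd (a : ℤ) {n : ℤ} (hn : Odd n) :
    kron a n = (if n < 0 ∧ a < 0 then -1 else 1) * jacobiSym a n.natAbs := by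
  have h2 : ¬ 2 ∣ n.natAbs := by
    rw [← even_iff_two_dvd, Nat.not_even_iff_odd, Int.natAbs_odd]; exact hn
  rw [kron, if_neg (by rintro rfl; simp at hn), Nat.factorization_eq_zero_of_not_dvd h2]
  simp

theorem kron_eq_of_even {a : ℤ} (ha : Even a) (χ : ℤ → ℤ) (hχ_even : ∀ n, Even n → χ n = 0)
    (hχ_nat : ∀ u : ℕ, Odd u → jacobiSym a u = χ u)
    (hχ_neg : ∀ n, χ (-n) = (if a < 0 then -1 else 1) * χ n) (n : ℤ) : kron a n = χ n := by
  rcases Int.even_or_odd n with hn | hn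
  · rw [hχ_even n hn]
    have ha1 : ¬ (a = 1 ∨ a = -1) := by rintro (rfl | rfl) <;> simp at ha
    rcases eq_or_ne n 0 with rfl | hn0
    · simp [kron, ha1]
    have hv : n.natAbs.factorization 2 ≠ 0 :=
      (Nat.prime_two.factorization_pos_of_dvd (by omega)
        (by rw [← even_iff_two_dvd, Int.natAbs_even]; exact hn)).ne'
    have hk : kron2 a = 0 := by simp [kron2, Int.even_iff.mp ha]
    simp [kron, hn0, hk, hv]
  · rw [kron_of_odd a hn, hχ_nat _ (Int.natAbs_odd.mpr hn)]
    rcases le_or_gt 0 n with hn0 | hn0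
    · rw [Int.natAbs_of_nonneg hn0, if_neg (by omega), one_mul]
    · rw [Int.ofNat_natAbs_of_nonpos hn0.le, hχ_neg]
      by_cases ha0 : a < 0 <;> simp [ha0, hn0]

theorem kron_neg_four : kron (-4) = fun n : ℤ => χ₄ n := by
  refine funext (kron_eq_of_even (by decide : Even (-4 : ℤ)) (fun n : ℤ => χ₄ n)
    (fun n hn => ?_) (fun u hu => ?_) (fun n => ?_))
  · exact (χ₄_int_eq_if_mod_four n).trans (if_pos (Int.even_iff.mp hn))
  · rw [show (-4 : ℤ) = -1 * 4 by norm_num, jacobiSym.mul_left, jacobiSym.at_neg_one hu,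
      jacobiSym.at_four hu, mul_one]; norm_cast
  · simp only [χ₄_int_eq_if_mod_four]; split_ifs <;> omega

theorem kron_eight : kron 8 = fun n : ℤ => χ₈ n := by
  refine funext (kron_eq_of_even (by decide : Even (8 : ℤ)) (fun n : ℤ => χ₈ n)
    (fun n hn => ?_) (fun u hu => ?_) (fun n => ?_))
  · exact (χ₈_int_eq_if_mod_eight n).trans (if_pos (Int.even_iff.mp hn))
  · rw [show (8 : ℤ) = 2 * 4 by norm_num, jacobiSym.mul_left, jacobiSym.at_two hu,
      jacobiSym.at_four hu, mul_one]; norm_cast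
  · simp only [χ₈_int_eq_if_mod_eight]; split_ifs <;> omega

theorem kron_neg_eight : kron (-8) = fun n : ℤ => χ₈' n := by
  refine funext (kron_eq_of_even (by decide : Even (-8 : ℤ)) (fun n : ℤ => χ₈' n)
    (fun n hn => ?_) (fun u hu => ?_) (fun n => ?_))
  · exact (χ₈'_int_eq_if_mod_eight n).trans (if_pos (Int.even_iff.mp hn))
  · rw [show (-8 : ℤ) = -2 * 4 by norm_num, jacobiSym.mul_left, jacobiSym.at_neg_two hu,
      jacobiSym.at_four hu, mul_one]; norm_cast
  · simp only [χ₈'_int_eq_if_mod_eight]; split_ifs <;> omega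

theorem chiP_two_congr (N : ℤ) {a b : ℤ} (h : 8 ∣ b - a) : chiP N 2 a = chiP N 2 b := by
  have h8 : (a : ZMod 8) = b :=
    (ZMod.intCast_eq_intCast_iff_dvd_sub a b 8).mpr (by exact_mod_cast h)
  have h4 : (a : ZMod 4) = b :=
    (ZMod.intCast_eq_intCast_iff_dvd_sub a b 4).mpr (dvd_trans (by norm_num) h)
  simp only [chiP, if_true, kron_neg_four, kron_eight, kron_neg_eight, h4, h8]

theorem chiP_of_ne_two (N : ℤ) {p : ℕ} (hp : p ≠ 2) (n : ℤ) : chiP N p n = jacobiSym n p :=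
  if_neg hp

theorem jacobiSym_prod_right (a : ℤ) {ι : Type*} (s : Finset ι) (f : ι → ℕ)
    (hf : ∀ i ∈ s, f i ≠ 0) : jacobiSym a (∏ i ∈ s, f i) = ∏ i ∈ s, jacobiSym a (f i) := by
  classical
  induction s using Finset.induction_on with
  | empty => simp [jacobiSym.one_right]
  | insert i s hi ih =>
    have hs : ∀ j ∈ s, f j ≠ 0 := fun j hj => hf j (Finset.mem_insert_of_mem hj)
    rw [Finset.prod_insert hi, Finset.prod_insert hi,
      jacobiSym.mul_right' a (hf i (Finset.mem_insert_self i s)) (Finset.prod_ne_zero_iff.mpr hs),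
      ih hs]

theorem prod_chiP_eq_jacobiSym (N n : ℤ) {w : ℕ} (hw : Squarefree w) (hodd : Odd w) :
    ∏ p ∈ w.primeFactors, chiP N p n = jacobiSym n w := by
  conv_rhs => rw [← Nat.prod_primeFactors_of_squarefree hw]
  rw [jacobiSym_prod_right n _ _ fun p hp => (Nat.prime_of_mem_primeFactors hp).ne_zero]
  refine Finset.prod_congr rfl fun p hp => chiP_of_ne_two N ?_ n
  rintro rfl
  exact Nat.not_even_iff_odd.mpr hodd (even_iff_two_dvd.mpr (Nat.dvd_of_mem_primeFactors hp))

theorem jacobiSym_natAbs_reciprocity {n : ℤ} (hn : Odd n) {w : ℕ} (hw : Odd w) :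
    jacobiSym w n.natAbs = (if w % 4 = 3 then χ₄ n else 1) * jacobiSym n w := by
  have hw2 := Nat.odd_iff.mp hw
  have hn2 := Nat.odd_iff.mp (Int.natAbs_odd.mpr hn)
  rw [← jacobiSym.quadratic_reciprocity_if hw2 hn2]
  obtain ⟨u, rfl | rfl⟩ := Int.eq_nat_or_neg n
  · simp only [Int.natAbs_natCast, χ₄_int_eq_if_mod_four]
    split_ifs <;> omega
  · simp only [Int.natAbs_neg, Int.natAbs_natCast, χ₄_int_eq_if_mod_four, jacobiSym.neg _ hw,
      χ₄_nat_eq_if_mod_four]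
    split_ifs <;> omega

theorem χ₈_natAbs (n : ℤ) : χ₈ (n.natAbs : ℕ) = χ₈ n := by
  obtain ⟨u, rfl | rfl⟩ := Int.eq_nat_or_neg n
  · simp
  · simp only [Int.natAbs_neg, Int.natAbs_natCast, χ₈_int_eq_if_mod_eight, χ₈_nat_eq_if_mod_eight]
    split_ifs <;> omega

theorem kron_eq_jacobiSym_of_emod_four_eq_one {N : ℤ} (hN : 0 < N) (h4 : N % 4 = 1) {n : ℤ}
    (hn : n ≠ 0) : kron N n = jacobiSym n N.natAbs := by
  have hN4 : N.natAbs % 4 = 1 := by omega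
  have hNodd : Odd N.natAbs := Nat.odd_iff.mpr (by omega)
  have hsign : jacobiSym n N.natAbs = jacobiSym n.natAbs N.natAbs := by
    obtain ⟨k, rfl | rfl⟩ := Int.eq_nat_or_neg n
    · simp
    · rw [jacobiSym.neg _ hNodd, χ₄_nat_one_mod_four hN4, one_mul]; simp
  rw [kron, if_neg hn, if_neg (by omega), one_mul, hsign, kron2, ← χ₈_int_eq_if_mod_eight]
  set e := n.natAbs.factorization 2
  set u := n.natAbs / 2 ^ e
  have hsplit : (n.natAbs : ℤ) = 2 ^ e * u := by
    exact_mod_cast (Nat.ordProj_mul_ordCompl_eq_self _ 2).symm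
  have hu : Odd u := Nat.odd_iff.mpr
    (Nat.two_dvd_ne_zero.mp (Nat.not_dvd_ordCompl Nat.prime_two (by omega)))
  rw [hsplit, jacobiSym.mul_left, jacobiSym.pow_left, jacobiSym.at_two hNodd,
    ← jacobiSym.quadratic_reciprocity_one_mod_four hN4 hu, Int.natAbs_of_nonneg hN.le, χ₈_natAbs]

theorem χ₈_int_sq_of_odd {n : ℤ} (hn : Odd n) : χ₈ n ^ 2 = 1 := by
  have := Int.odd_iff.mp hn
  rw [χ₈_int_eq_if_mod_eight]; split_ifs <;> omega

theorem kron_eq_prod_chiP_of_eq_two_pow_mul {N : ℤ} {a w : ℕ} (ha : a ≠ 0)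
    (hNw : N = 2 ^ a * w) (hw : Odd w) (hsf : Squarefree w) {n : ℤ} (hn : Odd n)
    (h2 : χ₈ n ^ a * (if w % 4 = 3 then χ₄ n else 1) = chiP N 2 n) :
    kron N n = ∏ p ∈ N.natAbs.primeFactors, chiP N p n := by
  have hN : 0 < N := hNw ▸ by have := hw.pos; positivity
  have h2w : 2 ∉ w.primeFactors := fun h =>
    Nat.not_even_iff_odd.mpr hw (even_iff_two_dvd.mpr (Nat.dvd_of_mem_primeFactors h))
  have hpf : N.natAbs.primeFactors = insert 2 w.primeFactors := by
    rw [hNw, show ((2 : ℤ) ^ a * w).natAbs = 2 ^ a * w by norm_cast,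
      Nat.primeFactors_mul (by positivity) hw.pos.ne',
      Nat.primeFactors_prime_pow ha Nat.prime_two, Finset.insert_eq]
  rw [hpf, Finset.prod_insert h2w, prod_chiP_eq_jacobiSym N n hsf hw, ← h2, kron_of_odd N hn,
    if_neg (by omega), one_mul, hNw]
  rw [jacobiSym.mul_left, jacobiSym.pow_left, jacobiSym.at_two (Int.natAbs_odd.mpr hn),
    χ₈_natAbs, jacobiSym_natAbs_reciprocity hn hw, mul_assoc]

theorem kron_eq_prod_chiP {N : ℤ} (hN : 1 < N) (hfund : IsFundDisc N) {n : ℤ}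
    (hn : IsCoprime n N) : kron N n = ∏ p ∈ N.natAbs.primeFactors, chiP N p n := by
  have h2N : ¬ (2 ∣ n ∧ 2 ∣ N) := fun h => by
    simpa [Int.isUnit_iff] using hn.isUnit_of_dvd' h.1 h.2
  rcases hfund with ⟨h4, hsf⟩ | ⟨m₀, rfl, hsf, h23⟩
  · have hn0 : n ≠ 0 := by
      rintro rfl
      rcases Int.isUnit_iff.mp (isCoprime_zero_left.mp hn) with h | h <;> omega
    rw [kron_eq_jacobiSym_of_emod_four_eq_one (by omega) h4 hn0,
      prod_chiP_eq_jacobiSym N n (Int.squarefree_natAbs.mpr hsf) (Nat.odd_iff.mpr (by omega))]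
  have hodd : Odd n := Int.odd_iff.mpr (by omega)
  have hsq := χ₈_int_sq_of_odd hodd
  have hsf' : Squarefree m₀.natAbs := Int.squarefree_natAbs.mpr hsf
  have hchiP : chiP (4 * m₀) 2 n = if m₀ % 4 = 3 then χ₄ n else if m₀ % 8 = 2 then χ₈ n
      else if m₀ % 8 = 6 then χ₈' n else 1 := by
    simp only [chiP, if_true, kron_neg_four, kron_eight, kron_neg_eight,
      show 4 * m₀ / 4 = m₀ by omega]
  rcases h23 with h2 | h3
  · refine kron_eq_prod_chiP_of_eq_two_pow_mul (a := 3) (w := m₀.natAbs / 2) (by norm_num)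
      (by omega) (Nat.odd_iff.mpr (by omega))
      (hsf'.squarefree_of_dvd ⟨2, by omega⟩) hodd ?_
    rw [hchiP, if_neg (show ¬ m₀ % 4 = 3 by omega)]
    rcases (by omega : m₀ % 8 = 2 ∨ m₀ % 8 = 6) with h8 | h8
    · rw [if_neg (show ¬ m₀.natAbs / 2 % 4 = 3 by omega), if_pos h8]
      linear_combination χ₈ n * hsq
    · rw [if_pos (show m₀.natAbs / 2 % 4 = 3 by omega), if_neg (show ¬ m₀ % 8 = 2 by omega),
        if_pos h8, χ₈'_int_eq_χ₄_mul_χ₈]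
      linear_combination χ₄ n * χ₈ n * hsq
  · refine kron_eq_prod_chiP_of_eq_two_pow_mul (a := 2) (w := m₀.natAbs) (by norm_num)
      (by omega) (Nat.odd_iff.mpr (by omega)) hsf' hodd ?_
    rw [hchiP, if_pos h3, if_pos (show m₀.natAbs % 4 = 3 by omega)]
    linear_combination χ₄ n * hsq

theorem chiP_sq_mul (N : ℤ) {p : ℕ} (hp : p.Prime) {c : ℤ} (hc : ¬ (p : ℤ) ∣ c) (x : ℤ) :
    chiP N p (c ^ 2 * x) = chiP N p x := by
  by_cases hp2 : p = 2
  · subst hp2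
    have hodd : Odd c := Int.odd_iff.mpr (by omega)
    refine chiP_two_congr N ?_
    rw [show x - c ^ 2 * x = -((c ^ 2 - 1) * x) by ring, dvd_neg]
    exact dvd_mul_of_dvd_left (Int.eight_dvd_sq_sub_one_of_odd hodd) x
  · have hcop : Int.gcd c p = 1 := Int.isCoprime_iff_gcd_eq_one.mp
      ((Prime.coprime_iff_not_dvd (Nat.prime_iff_prime_int.mp hp)).mpr hc).symm
    rw [chiP_of_ne_two N hp2, chiP_of_ne_two N hp2, jacobiSym.mul_left, jacobiSym.sq_one' hcop,
      one_mul]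

theorem chiP_congr {N : ℤ} (hfund : IsFundDisc N) {p : ℕ} (hp : p ∈ N.natAbs.primeFactors)
    {a b : ℤ} (h : (p : ℤ) ^ (2 * N.natAbs.factorization p) ∣ a - b) :
    chiP N p a = chiP N p b := by
  obtain ⟨hpp, hpN, hN0⟩ := Nat.mem_primeFactors.mp hp
  by_cases hp2 : p = 2
  · subst hp2
    have h4 : 2 ^ 2 ∣ N.natAbs := by
      rcases hfund with ⟨h4, -⟩ | ⟨m₀, rfl, -⟩
      · omega
      · exact Int.natAbs_dvd_natAbs.mpr (dvd_mul_right 4 m₀)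
    have hv := (Nat.prime_two.pow_dvd_iff_le_factorization hN0).mp h4
    refine (chiP_two_congr N (dvd_trans ?_ h)).symm
    exact dvd_trans (by norm_num)
      (pow_dvd_pow (2 : ℤ) (by omega : 4 ≤ 2 * N.natAbs.factorization 2))
  · rw [chiP_of_ne_two N hp2, chiP_of_ne_two N hp2]
    refine jacobiSym.mod_left' (Int.modEq_iff_dvd.mpr ?_).symm
    refine dvd_trans (dvd_pow_self (p : ℤ) ?_) h
    have := hpp.factorization_pos_of_dvd hN0 hpN
    omega

theorem Npart_mul_prod_sdiff {N : ℤ} (hN : N ≠ 0) (m : ℕ) :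
    Npart N m * ∏ p ∈ N.natAbs.primeFactors \ m.primeFactors, p ^ N.natAbs.factorization p =
      N.natAbs := by
  rw [Npart, Finset.prod_inter_mul_prod_sdiff]
  exact Nat.prod_factorization_pow_eq_self (Int.natAbs_ne_zero.mpr hN)

theorem Npart_pos (N : ℤ) (m : ℕ) : 0 < Npart N m :=
  Finset.prod_pos fun _ hp =>
    pow_pos (Nat.prime_of_mem_primeFactors (Finset.mem_inter.mp hp).1).pos _

theorem Npart_dvd {N : ℤ} (hN : N ≠ 0) (m : ℕ) : (Npart N m : ℤ) ∣ N :=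
  Int.natCast_dvd.mpr (Dvd.intro _ (Npart_mul_prod_sdiff hN m))

theorem pow_factorization_dvd_Npart {N : ℤ} {m p : ℕ} (hpN : p ∈ N.natAbs.primeFactors)
    (hpm : p ∈ m.primeFactors) : p ^ N.natAbs.factorization p ∣ Npart N m :=
  Finset.dvd_prod_of_mem _ (Finset.mem_inter.mpr ⟨hpN, hpm⟩)

theorem pow_factorization_dvd_ediv_Npart {N : ℤ} (hN : 0 < N) {m p : ℕ}
    (hpN : p ∈ N.natAbs.primeFactors) (hpm : p ∉ m.primeFactors) :
    (p : ℤ) ^ N.natAbs.factorization p ∣ N / Npart N m := by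
  have hNQ : N = Npart N m *
      ((∏ q ∈ N.natAbs.primeFactors \ m.primeFactors, q ^ N.natAbs.factorization q : ℕ) : ℤ) := by
    rw [← Nat.cast_mul, Npart_mul_prod_sdiff hN.ne' m, Int.natAbs_of_nonneg hN.le]
  rw [Int.ediv_eq_of_eq_mul_right (by exact_mod_cast (Npart_pos N m).ne') hNQ]
  exact_mod_cast Finset.dvd_prod_of_mem _ (Finset.mem_sdiff.mpr ⟨hpN, hpm⟩)

theorem not_dvd_Npart (N : ℤ) {m p : ℕ} (hp : p.Prime) (hpm : p ∉ m.primeFactors) :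
    ¬ p ∣ Npart N m := by
  refine (hp.coprime_iff_not_dvd).mp (Nat.Coprime.prod_right fun q hq => ?_)
  obtain ⟨hqN, hqm⟩ := Finset.mem_inter.mp hq
  exact Nat.Coprime.pow_right _ ((Nat.coprime_primes hp (Nat.prime_of_mem_primeFactors hqN)).mpr
    (by rintro rfl; exact hpm hqm))

theorem kron_eq_chiPart_mul_chiCoPart {N : ℤ} (hN : 1 < N) (hfund : IsFundDisc N) {m : ℕ}
    (hmN : (m : ℤ) ∣ N) {x : ℤ} (hx1 : (Npart N m : ℤ) ^ 2 ∣ x + 1)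
    (hx2 : (N / Npart N m) ^ 2 ∣ Npart N m * x - 1) :
    kron N x = chiPart N m (-1) * chiCoPart N m (Npart N m) := by
  set Q := Npart N m
  have hQN : (Q : ℤ) * (N / Q) = N := Int.mul_ediv_cancel' (Npart_dvd (by omega) m)
  have hcop : IsCoprime x N := by
    obtain ⟨c, hc⟩ := hx1
    obtain ⟨d, hd⟩ := hx2
    rw [← hQN]
    exact IsCoprime.mul_right ⟨-1, Q * c, by linear_combination -hc⟩
      ⟨Q, -(N / Q * d), by linear_combination hd⟩
  have hsub : m.primeFactors ⊆ N.natAbs.primeFactors :=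
    Nat.primeFactors_mono (Int.natCast_dvd.mp hmN) (by omega)
  rw [kron_eq_prod_chiP hN hfund hcop, ← Finset.prod_sdiff hsub, chiPart, chiCoPart, mul_comm]
  congr 1
  · refine Finset.prod_congr rfl fun p hpm => chiP_congr hfund (hsub hpm) ?_
    rw [sub_neg_eq_add, pow_mul']
    exact dvd_trans (pow_dvd_pow_of_dvd
      (by exact_mod_cast pow_factorization_dvd_Npart (hsub hpm) hpm) 2) hx1
  · refine Finset.prod_congr rfl fun p hp => ?_
    obtain ⟨hpN, hpm⟩ := Finset.mem_sdiff.mp hp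
    have hpp := Nat.prime_of_mem_primeFactors hpN
    -- `Q x ≡ 1`, so `Q² x ≡ Q` modulo `p ^ (2 v_p(N))`
    rw [← chiP_sq_mul N hpp (c := Q) (by exact_mod_cast not_dvd_Npart N hpp hpm) x]
    refine chiP_congr hfund hpN ?_
    rw [show (Q : ℤ) ^ 2 * x - Q = Q * (Q * x - 1) by ring, pow_mul']
    exact dvd_mul_of_dvd_right (dvd_trans (pow_dvd_pow_of_dvd
      (pow_factorization_dvd_ediv_Npart (by omega) hpN hpm) 2) hx2) _

def denom (A : Matrix (Fin 2) (Fin 2) ℝ) (z : ℂ) : ℂ := (A 1 0 : ℂ) * z + (A 1 1 : ℂ)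

theorem moeb_eq_div (A : Matrix (Fin 2) (Fin 2) ℝ) (z : ℂ) :
    moeb A z = ((A 0 0 : ℂ) * z + (A 0 1 : ℂ)) / denom A z := rfl

theorem slash_apply (k : ℤ) (A : Matrix (Fin 2) (Fin 2) ℝ) (f : ℂ → ℂ) (z : ℂ) :
    slash k A f z = ((A.det ^ ((k : ℝ) / 2) : ℝ) : ℂ) * denom A z ^ (-k) * f (moeb A z) := rfl

theorem denom_ne_zero {A : Matrix (Fin 2) (Fin 2) ℝ} (hA : A.det ≠ 0) {z : ℂ} (hz : z.im ≠ 0) :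
    denom A z ≠ 0 := by
  intro h
  have hc : A 1 0 = 0 := by
    simpa [denom, hz] using congrArg Complex.im h
  have hd : A 1 1 = 0 := by
    simpa [denom, hc] using h
  exact hA (by rw [Matrix.det_fin_two, hc, hd]; ring)

theorem denom_mul (A B : Matrix (Fin 2) (Fin 2) ℝ) {z : ℂ} (hz : denom A z ≠ 0) :
    denom (B * A) z = denom B (moeb A z) * denom A z := by
  rw [moeb_eq_div]
  simp only [denom] at hz ⊢
  rw [add_mul, mul_assoc, div_mul_cancel₀ _ hz]
  simp only [Matrix.mul_apply, Fin.sum_univ_two]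
  push_cast
  ring

theorem moeb_mul (A B : Matrix (Fin 2) (Fin 2) ℝ) {z : ℂ} (hz : denom A z ≠ 0) :
    moeb (B * A) z = moeb B (moeb A z) := by
  have hnum : ((B * A) 0 0 : ℂ) * z + ((B * A) 0 1 : ℂ) =
      ((B 0 0 : ℂ) * moeb A z + (B 0 1 : ℂ)) * denom A z := by
    rw [moeb_eq_div]
    simp only [denom] at hz ⊢
    rw [add_mul, mul_assoc, div_mul_cancel₀ _ hz]
    simp only [Matrix.mul_apply, Fin.sum_univ_two]
    push_cast
    ring
  rw [moeb_eq_div (B * A), hnum, denom_mul A B hz, mul_div_mul_right _ _ hz, moeb_eq_div B]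

theorem slash_mul (k : ℤ) {A B : Matrix (Fin 2) (Fin 2) ℝ} (hA : 0 < A.det) (hB : 0 ≤ B.det)
    (f : ℂ → ℂ) {z : ℂ} (hz : z.im ≠ 0) :
    slash k (B * A) f z = slash k A (slash k B f) z := by
  have hdA := denom_ne_zero hA.ne' hz
  rw [slash_apply, slash_apply, slash_apply, moeb_mul A B hdA, denom_mul A B hdA, mul_zpow,
    Matrix.det_mul, Real.mul_rpow hB hA.le]
  push_cast
  ring

theorem slash_smul (k : ℤ) {r : ℝ} (hr : 0 < r) {A : Matrix (Fin 2) (Fin 2) ℝ} (hA : 0 ≤ A.det)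
    (f : ℂ → ℂ) : slash k (r • A) f = slash k A f := by
  funext z
  have hr0 : (r : ℂ) ≠ 0 := by exact_mod_cast hr.ne'
  have hdet : ((r • A).det ^ ((k : ℝ) / 2) : ℝ) = r ^ k * A.det ^ ((k : ℝ) / 2) := by
    rw [Matrix.det_smul, Fintype.card_fin, Real.mul_rpow (by positivity) hA,
      ← Real.rpow_natCast, ← Real.rpow_mul hr.le, ← Real.rpow_intCast]
    congr 2
    push_cast
    ring
  have hdenom : denom (r • A) z = r * denom A z := by
    simp only [denom, Matrix.smul_apply, smul_eq_mul]
    push_cast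
    ring
  have hmoeb : moeb (r • A) z = moeb A z := by
    have hnum : ((r • A) 0 0 : ℂ) * z + ((r • A) 0 1 : ℂ) = r * ((A 0 0 : ℂ) * z + A 0 1) := by
      simp only [Matrix.smul_apply, smul_eq_mul]
      push_cast
      ring
    rw [moeb_eq_div, moeb_eq_div, hdenom, hnum, mul_div_mul_left _ _ hr0]
  rw [slash_apply, slash_apply, hdet, hdenom, hmoeb, mul_zpow, zpow_neg, zpow_neg]
  push_cast
  field_simp

/-- For `t ∣ γ₁₁`, the integral matrix `η² / t`, where `η = γ · diag(t, 1)`. -/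
def etaSqMat (γ : Matrix (Fin 2) (Fin 2) ℤ) (t : ℕ) : Matrix (Fin 2) (Fin 2) ℤ :=
  γ * !![γ 0 0 * t, γ 0 1; γ 1 0, γ 1 1 / t]

section EtaSq

variable {γ : Matrix (Fin 2) (Fin 2) ℤ} {t : ℕ}

theorem etaSqMat_one_zero : etaSqMat γ t 1 0 = (γ 0 0 * t + γ 1 1) * γ 1 0 := by
  simp [etaSqMat, Matrix.mul_apply, Fin.sum_univ_two]
  ring

theorem etaSqMat_one_one : etaSqMat γ t 1 1 = γ 1 0 * γ 0 1 + γ 1 1 * (γ 1 1 / t) := by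
  simp [etaSqMat, Matrix.mul_apply, Fin.sum_univ_two]

theorem det_etaSqMat (hγ : γ.det = 1) (ht : (t : ℤ) ∣ γ 1 1) : (etaSqMat γ t).det = 1 := by
  have h := Matrix.det_fin_two γ
  rw [etaSqMat, Matrix.det_mul, hγ, one_mul, Matrix.det_fin_two_of]
  linear_combination γ 0 0 * Int.mul_ediv_cancel' ht - hγ.symm.trans h

theorem etaMat_mul_self (ht : (t : ℤ) ∣ γ 1 1) :
    etaMat γ t * etaMat γ t = (t : ℝ) • (etaSqMat γ t).map (Int.cast : ℤ → ℝ) := by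
  have htd : (t : ℝ) * ((γ 1 1 / t : ℤ) : ℝ) = γ 1 1 := by
    exact_mod_cast Int.mul_ediv_cancel' ht
  ext i j
  fin_cases j <;> simp [etaMat, etaSqMat, Matrix.mul_apply, Fin.sum_univ_two]
  · ring
  · linear_combination -(γ i 1 : ℝ) * htd

theorem det_etaMat (hγ : γ.det = 1) : (etaMat γ t).det = t := by
  rw [etaMat, Matrix.det_mul, ← Int.cast_det, hγ, Matrix.det_fin_two_of]
  simp

theorem slash_etaMat_etaMat (k : ℤ) (f : ℂ → ℂ) (hγ : γ.det = 1) (ht : 0 < t)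
    (htγ : (t : ℤ) ∣ γ 1 1) {z : ℂ} (hz : z.im ≠ 0) :
    slash k (etaMat γ t) (slash k (etaMat γ t) f) z = islash k (etaSqMat γ t) f z := by
  have hη : 0 < (etaMat γ t).det := by rw [det_etaMat hγ]; exact_mod_cast ht
  rw [← slash_mul k hη hη.le f hz, etaMat_mul_self htγ, slash_smul k (by exact_mod_cast ht), islash]
  rw [← Int.cast_det, det_etaSqMat hγ htγ, Int.cast_one]
  exact zero_le_one

theorem etaSqMat_one_zero_dvd {R : ℤ} (hS : CongMod ((t : ℤ) ^ 2) γ !![0, -1; 1, 0])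
    (hI : CongMod (R ^ 2) γ 1) : (t : ℤ) * R ∣ etaSqMat γ t 1 0 := by
  have h11 : (t : ℤ) ^ 2 ∣ γ 1 1 := by simpa using hS 1 1
  have h10 : R ^ 2 ∣ γ 1 0 := by simpa using hI 1 0
  rw [etaSqMat_one_zero]
  exact mul_dvd_mul (dvd_add (dvd_mul_left _ _) ((dvd_pow_self _ two_ne_zero).trans h11))
    ((dvd_pow_self _ two_ne_zero).trans h10)

theorem etaSqMat_one_one_add_one_dvd (hS : CongMod ((t : ℤ) ^ 2) γ !![0, -1; 1, 0]) :
    (t : ℤ) ^ 2 ∣ etaSqMat γ t 1 1 + 1 := by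
  have h01 : (t : ℤ) ^ 2 ∣ γ 0 1 + 1 := by simpa using hS 0 1
  have h10 : (t : ℤ) ^ 2 ∣ γ 1 0 - 1 := by simpa using hS 1 0
  have h11 : (t : ℤ) ^ 2 ∣ γ 1 1 := by simpa using hS 1 1
  rw [etaSqMat_one_one, show γ 1 0 * γ 0 1 + γ 1 1 * (γ 1 1 / t) + 1 =
    (γ 1 0 - 1) * γ 0 1 + (γ 0 1 + 1) + γ 1 1 * (γ 1 1 / t) by ring]
  exact dvd_add (dvd_add (h10.mul_right _) h01) (h11.mul_right _)

theorem etaSqMat_one_one_mul_sub_one_dvd {R : ℤ} (htγ : (t : ℤ) ∣ γ 1 1)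
    (hI : CongMod (R ^ 2) γ 1) :
    R ^ 2 ∣ t * etaSqMat γ t 1 1 - 1 := by
  have h10 : R ^ 2 ∣ γ 1 0 := by simpa using hI 1 0
  have h11 : R ^ 2 ∣ γ 1 1 - 1 := by simpa using hI 1 1
  rw [etaSqMat_one_one, show (t : ℤ) * (γ 1 0 * γ 0 1 + γ 1 1 * (γ 1 1 / t)) - 1 =
      t * γ 0 1 * γ 1 0 + (γ 1 1 - 1) * (γ 1 1 + 1) by
    linear_combination γ 1 1 * Int.mul_ediv_cancel' htγ]
  exact dvd_add (h10.mul_left _) (h11.mul_right _)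

end EtaSq

theorem stmt13_general (N : ℤ) (hN : 1 < N) (hfund : IsFundDisc N) (k : ℤ)
    (f : ℂ → ℂ) (hf : IsWeaklyHol N.toNat k (kron N) f)
    (m : ℕ) (hmN : (m : ℤ) ∣ N)
    (γ : Matrix (Fin 2) (Fin 2) ℤ) (hγdet : γ.det = 1)
    (hγS : CongMod ((Npart N m : ℤ) ^ 2) γ !![0, -1; 1, 0])
    (hγI : CongMod ((N / (Npart N m : ℤ)) ^ 2) γ 1) :
    ∀ z ∈ UHP,
      slash k (etaMat γ (Npart N m)) (slash k (etaMat γ (Npart N m)) f) z =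
        (chiPart N m (-1) : ℂ) * (chiCoPart N m ((Npart N m : ℤ)) : ℂ) * f z := by
  intro z hz
  have hγ11 : (Npart N m : ℤ) ∣ γ 1 1 :=
    dvd_trans (dvd_pow_self _ two_ne_zero) (by simpa using hγS 1 1)
  have hlevel : (N.toNat : ℤ) ∣ etaSqMat γ (Npart N m) 1 0 := by
    have hN' : (N.toNat : ℤ) = Npart N m * (N / Npart N m) := by
      rw [Int.toNat_of_nonneg (by omega), Int.mul_ediv_cancel' (Npart_dvd (by omega) m)]
    rw [hN']
    exact etaSqMat_one_zero_dvd hγS hγI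
  rw [slash_etaMat_etaMat k f hγdet (Npart_pos N m) hγ11 (ne_of_gt hz),
    hf.2.1 _ (det_etaSqMat hγdet hγ11) hlevel z hz,
    kron_eq_chiPart_mul_chiCoPart hN hfund hmN (etaSqMat_one_one_add_one_dvd hγS)
      (etaSqMat_one_one_mul_sub_one_dvd hγ11 hγI)]
  push_cast
  ring

/-- for `f ∈ A(N, k, χ_D)` and a positive divisor `m` of the fundamental
discriminant `N`, with `γ_m ∈ SL₂(ℤ)` satisfying `γ_m ≡ S (mod N_m²)` and
`γ_m ≡ I (mod (N/N_m)²)`, one has `f|_k η_m² = χ_m(-1) χ'_m(N_m) f`. -/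
theorem stmt13 (N : ℤ) (hN : 1 < N) (hfund : IsFundDisc N) (k : ℤ)
    (f : ℂ → ℂ) (hf : IsWeaklyHol N.toNat k (kron N) f)
    (m : ℕ) (hm : 0 < m) (hmN : (m : ℤ) ∣ N)
    (γ : Matrix (Fin 2) (Fin 2) ℤ) (hγdet : γ.det = 1)
    (hγS : CongMod ((Npart N m : ℤ) ^ 2) γ !![0, -1; 1, 0])
    (hγI : CongMod ((N / (Npart N m : ℤ)) ^ 2) γ 1) :
    ∀ z ∈ UHP,
      slash k (etaMat γ (Npart N m)) (slash k (etaMat γ (Npart N m)) f) z =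
        (chiPart N m (-1) : ℂ) * (chiCoPart N m ((Npart N m : ℤ)) : ℂ) * f z :=
  stmt13_general N hN hfund k f hf m hmN γ hγdet hγS hγI
end
end

section
/- For every even weight k ≥ 2, fundamental discriminant N > 1 with character χ_D = (N/·), and sign vector δ ∈ {±1}^{ω(N)}, the space of Eisenstein series in M(N, k, χ_D) satisfying the δ-condition is exactly one-dimensional. -/
noncomputable section

open Complex

/-- The Fourier coefficients of the Eisenstein series `E_m` of weight `k`, level `N` and
character `χ_D`: `E_m = δ_{1,m} L(1-k, χ_D) + 2 Σ_{n ≥ 1} (Σ_{d ∣ n} χ_m(n/d) χ'_m(d) d^{k-1}) qⁿ`. -/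
def EmCoeff (N : ℤ) (k : ℤ) (L : ℂ) (m : ℕ) : ℕ → ℂ := fun n =>
  if n = 0 then (if m = 1 then L else 0)
  else 2 * ∑ d ∈ n.divisors,
    (chiPart N m ((n / d : ℕ) : ℤ) : ℂ) * (chiCoPart N m (d : ℤ) : ℂ) * (d : ℂ) ^ (k - 1)

/-- The `δ`-condition on a sequence of Fourier coefficients: `g n = 0` whenever
`χ_p(n) = -δ_p` for some prime `p ∣ N`. -/
def DeltaCond (N : ℤ) (δ : {p : ℕ // p ∈ N.natAbs.primeFactors} → Bool)
    (g : ℕ → ℂ) : Prop :=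
  ∀ n : ℕ, (∃ p : {p : ℕ // p ∈ N.natAbs.primeFactors},
    chiP N (p : ℕ) (n : ℤ) = -(if δ p then 1 else -1)) → g n = 0

/-- The space (of coefficient sequences) of Eisenstein series of level `N`, weight `k`,
character `χ_D` satisfying the `δ`-condition: linear combinations of the basis
`{E_m : m ∣ N, m = N_m}` whose coefficients satisfy the `δ`-condition. -/
def EisSet (N : ℤ) (k : ℤ) (L : ℂ)
    (δ : {p : ℕ // p ∈ N.natAbs.primeFactors} → Bool) : Set (ℕ → ℂ) :=
  {g | (∃ c : ℕ → ℂ, g = fun n =>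
      ∑ m ∈ (N.toNat.divisors.filter fun m => Npart N m = m), c m * EmCoeff N k L m n) ∧
    DeltaCond N δ g}

/-!
The sign vector `δ` singles out `E_δ = Σ_m (∏_{p ∣ m} δ_p) E_m`. For `n ≠ 0` its `n`-th
coefficient factors as `2 Σ_{d ∣ n} d^{k-1} ∏_{p ∣ N} (χ_p(d) + δ_p χ_p(n/d))`, and the
`p`-factor vanishes as soon as `χ_p(n) = -δ_p`; so `E_δ` satisfies the `δ`-condition.

Conversely, at a prime `q` the coefficient of `Σ_m c_m E_m` equals
`2 (1 + χ_D(q) q^{k-1}) Σ_m c_m χ_m(q)`: up to a nonzero factor, the Walsh transform of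
`(c_m (∏_{p ∣ m} δ_p))_m` at the sign vector `(δ_p χ_p(q))_p`. By Dirichlet's theorem every sign
vector is realised by some prime, the `δ`-condition kills the transform at every sign vector
except the trivial one, and Walsh inversion gives `c_m = c ∏_{p ∣ m} δ_p`.
-/

open Finset

/-- A quadratic character of `p`-power conductor, viewed as a function on `ℕ`. -/
structure IsLocalQuadraticChar (p : ℕ) (f : ℕ → ℤ) : Prop where
  map_one : f 1 = 1
  map_mul : ∀ a b, f (a * b) = f a * f b
  eq_zero_of_dvd : ∀ n, p ∣ n → f n = 0
  eq_one_or_neg_one : ∀ n, ¬ p ∣ n → f n = 1 ∨ f n = -1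
  exists_periodic : ∃ e, ∀ a b, a ≡ b [MOD p ^ e] → f a = f b
  exists_eq_neg_one : ∃ r, ¬ p ∣ r ∧ f r = -1

namespace IsLocalQuadraticChar

variable {p : ℕ} {f : ℕ → ℤ}

lemma add_mul_div_eq_zero (hf : IsLocalQuadraticChar p f) {w : ℤ} (hw : w = 1 ∨ w = -1)
    {d n : ℕ} (hd : d ∣ n) (hn : f n = -w) : f d + w * f (n / d) = 0 := by
  have hpn : ¬ p ∣ n := fun h => by rcases hw with rfl | rfl <;> simp [hf.eq_zero_of_dvd n h] at hn
  have hmul : f d * f (n / d) = -w := by rw [← hf.map_mul, Nat.mul_div_cancel' hd, hn]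
  rcases hf.eq_one_or_neg_one d (fun h => hpn (h.trans hd)) with h | h <;> rw [h] at hmul ⊢ <;>
    rcases hw with rfl | rfl <;> omega

end IsLocalQuadraticChar

lemma isLocalQuadraticChar_jacobiSym {p : ℕ} [Fact p.Prime] (hp : p ≠ 2) :
    IsLocalQuadraticChar p (fun n => jacobiSym n p) where
  map_one := by simp
  map_mul a b := by push_cast; exact jacobiSym.mul_left _ _ p
  eq_zero_of_dvd n h := by
    rw [← jacobiSym.legendreSym.to_jacobiSym, legendreSym.eq_zero_iff]
    exact_mod_cast (ZMod.natCast_eq_zero_iff n p).2 h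
  eq_one_or_neg_one n h := by
    rw [← jacobiSym.legendreSym.to_jacobiSym]
    exact legendreSym.eq_one_or_neg_one p (by exact_mod_cast mt (ZMod.natCast_eq_zero_iff n p).1 h)
  exists_periodic := ⟨1, fun a b h => jacobiSym.mod_left' (by rw [pow_one] at h; exact_mod_cast h)⟩
  exists_eq_neg_one := by
    obtain ⟨b, hb⟩ := FiniteField.exists_nonsquare (F := ZMod p) (by rwa [ZMod.ringChar_zmod_n])
    refine ⟨b.val, fun h => hb ?_, ?_⟩
    · rw [← ZMod.natCast_zmod_val b, (ZMod.natCast_eq_zero_iff _ p).2 h]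
      exact ⟨0, by ring⟩
    · rw [← jacobiSym.legendreSym.to_jacobiSym, legendreSym.eq_neg_one_iff', ZMod.natCast_zmod_val]
      exact hb

lemma kron_zero_right {c : ℤ} (hc : ¬ (c = 1 ∨ c = -1)) : kron c 0 = 0 := by
  simp [kron, hc]

lemma jacobiSym_eq_zero_of_two_dvd {c : ℤ} (hc : 2 ∣ c) {n : ℕ} [NeZero n] (hn : 2 ∣ n) :
    jacobiSym c n = 0 := by
  refine jacobiSym.eq_zero_iff_not_coprime.2 fun h => ?_
  have := Int.dvd_gcd hc (Int.natCast_dvd_natCast.2 hn)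
  rw [h] at this
  norm_num at this

lemma kron_natCast_eq_jacobiSym {c : ℤ} (hc : 2 ∣ c) {n : ℕ} (hn : n ≠ 0) :
    kron c n = jacobiSym c n := by
  have : NeZero n := ⟨hn⟩
  by_cases h2 : n.factorization 2 = 0
  · simp [kron, hn, h2]
  · have hc2 : kron2 c = 0 := by simp [kron2, Int.emod_eq_zero_of_dvd hc]
    simp [kron, hn, hc2, h2,
      jacobiSym_eq_zero_of_two_dvd hc (Nat.dvd_of_factorization_pos h2)]

lemma jacobiSym_neg_one_pow_mul_two_pow_congr (i j : ℕ) {a b : ℕ} (ha : Odd a) (hb : Odd b)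
    (hab : a ≡ b [MOD 8]) : jacobiSym ((-1) ^ i * 2 ^ j) a = jacobiSym ((-1) ^ i * 2 ^ j) b := by
  have h4 : (a : ZMod 4) = b := (ZMod.natCast_eq_natCast_iff _ _ _).2 (hab.of_mul_left 2)
  have h8 : (a : ZMod 8) = b := (ZMod.natCast_eq_natCast_iff _ _ _).2 hab
  simp only [jacobiSym.mul_left, jacobiSym.pow_left, jacobiSym.at_neg_one ha,
    jacobiSym.at_neg_one hb, jacobiSym.at_two ha, jacobiSym.at_two hb, h4, h8]

lemma kron_natCast_eq_zero {c : ℤ} (hc2 : 2 ∣ c) (hc1 : ¬ (c = 1 ∨ c = -1)) {n : ℕ}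
    (hn : 2 ∣ n) : kron c n = 0 := by
  rcases eq_or_ne n 0 with rfl | hn0
  · exact kron_zero_right hc1
  · have : NeZero n := ⟨hn0⟩
    rw [kron_natCast_eq_jacobiSym hc2 hn0, jacobiSym_eq_zero_of_two_dvd hc2 hn]

lemma kron_natCast_mul {c : ℤ} (hc2 : 2 ∣ c) (hc1 : ¬ (c = 1 ∨ c = -1)) (a b : ℕ) :
    kron c (a * b : ℕ) = kron c a * kron c b := by
  rcases eq_or_ne a 0 with rfl | ha
  · simp [kron_zero_right hc1]
  rcases eq_or_ne b 0 with rfl | hb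
  · simp [kron_zero_right hc1]
  rw [kron_natCast_eq_jacobiSym hc2 (mul_ne_zero ha hb), kron_natCast_eq_jacobiSym hc2 ha,
    kron_natCast_eq_jacobiSym hc2 hb]
  exact jacobiSym.mul_right' _ ha hb

lemma isLocalQuadraticChar_kron {c : ℤ} (hc : c = -4 ∨ c = 8 ∨ c = -8) :
    IsLocalQuadraticChar 2 (fun n => kron c n) := by
  obtain ⟨i, j, hj, hcij⟩ : ∃ i j : ℕ, j ≠ 0 ∧ c = (-1) ^ i * 2 ^ j := by
    rcases hc with rfl | rfl | rfl
    exacts [⟨1, 2, by norm_num⟩, ⟨0, 3, by norm_num⟩, ⟨1, 3, by norm_num⟩]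
  have hc2 : 2 ∣ c := hcij ▸ Dvd.dvd.mul_left (dvd_pow_self 2 hj) _
  have hc1 : ¬ (c = 1 ∨ c = -1) := by rcases hc with rfl | rfl | rfl <;> norm_num
  have hjac : ∀ {n : ℕ}, ¬ 2 ∣ n → kron c n = jacobiSym c n := fun hn =>
    kron_natCast_eq_jacobiSym hc2 (by rintro rfl; simp at hn)
  refine
    { map_one := by simpa using hjac (n := 1) (by norm_num)
      map_mul := kron_natCast_mul hc2 hc1
      eq_zero_of_dvd := fun n => kron_natCast_eq_zero hc2 hc1
      eq_one_or_neg_one := fun n hn => ?_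
      exists_periodic := ⟨3, fun a b hab => ?_⟩
      exists_eq_neg_one := ?_ }
  · rw [hjac hn]
    refine jacobiSym.eq_one_or_neg_one ?_
    rw [hcij, Int.gcd_eq_natAbs, Int.natAbs_mul, Int.natAbs_pow, Int.natAbs_pow]
    simpa using Nat.Coprime.pow_left j (Nat.coprime_two_left.2 (Nat.odd_iff.2 (by omega)))
  · have h2 : 2 ∣ a ↔ 2 ∣ b := Nat.ModEq.dvd_iff hab (by norm_num)
    by_cases ha : 2 ∣ a
    · rw [kron_natCast_eq_zero hc2 hc1 ha, kron_natCast_eq_zero hc2 hc1 (h2.1 ha)]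
    · have hb : ¬ 2 ∣ b := mt h2.2 ha
      rw [hjac ha, hjac hb, hcij]
      exact jacobiSym_neg_one_pow_mul_two_pow_congr i j (Nat.odd_iff.2 (by omega))
        (Nat.odd_iff.2 (by omega)) hab
  · rcases hc with rfl | rfl | rfl
    exacts [⟨3, by norm_num, by rw [hjac (by norm_num)]; norm_num⟩,
      ⟨3, by norm_num, by rw [hjac (by norm_num)]; norm_num⟩,
      ⟨5, by norm_num, by rw [hjac (by norm_num)]; norm_num⟩]

lemma chiP_two_eq_kron {N : ℤ} (hfund : IsFundDisc N) (h2 : 2 ∣ N) :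
    ∃ c : ℤ, (c = -4 ∨ c = 8 ∨ c = -8) ∧ ∀ n, chiP N 2 n = kron c n := by
  rcases hfund with ⟨h1, -⟩ | ⟨m, rfl, -, hm⟩
  · omega
  have hchi : ∀ n, chiP (4 * m) 2 n = if m % 4 = 3 then kron (-4) n
      else if m % 8 = 2 then kron 8 n else if m % 8 = 6 then kron (-8) n else 1 := by
    intro n
    rw [chiP, if_pos rfl, Int.mul_ediv_cancel_left m (by norm_num)]
  rcases hm with hm | hm
  · rcases (by omega : m % 8 = 2 ∨ m % 8 = 6) with h8 | h8
    · exact ⟨8, by norm_num, fun n => by rw [hchi, if_neg (by omega), if_pos h8]⟩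
    · exact ⟨-8, by norm_num, fun n => by
        rw [hchi, if_neg (by omega), if_neg (by omega), if_pos h8]⟩
  · exact ⟨-4, by norm_num, fun n => by rw [hchi, if_pos hm]⟩

lemma isLocalQuadraticChar_chiP {N : ℤ} (hfund : IsFundDisc N) {p : ℕ}
    (hp : p ∈ N.natAbs.primeFactors) : IsLocalQuadraticChar p (fun n => chiP N p n) := by
  by_cases hp2 : p = 2
  · subst hp2
    obtain ⟨c, hc, hchi⟩ :=
      chiP_two_eq_kron hfund (Int.natCast_dvd.2 (Nat.dvd_of_mem_primeFactors hp))
    simpa only [hchi] using isLocalQuadraticChar_kron hc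
  · have : Fact p.Prime := ⟨Nat.prime_of_mem_primeFactors hp⟩
    simpa only [chiP, if_neg hp2] using isLocalQuadraticChar_jacobiSym hp2

lemma exists_prime_modEq_forall {P : Finset ℕ} (hP : ∀ p ∈ P, p.Prime) (e r : ℕ → ℕ)
    (hr : ∀ p ∈ P, ¬ p ∣ r p) : ∃ q, q.Prime ∧ ∀ p ∈ P, q ≡ r p [MOD p ^ e p] := by
  have hne : ∀ p ∈ P, p ^ e p ≠ 0 := fun p hp => pow_ne_zero _ (hP p hp).ne_zero
  have hcop : Set.Pairwise P (Function.onFun Nat.Coprime fun p => p ^ e p) :=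
    fun p hp p' hp' hpp' => Nat.Coprime.pow _ _ ((Nat.coprime_primes (hP p hp) (hP p' hp')).2 hpp')
  obtain ⟨a, ha⟩ := Nat.chineseRemainderOfFinset r (fun p => p ^ e p) P hne hcop
  have haM : a.Coprime (∏ p ∈ P, p ^ e p) := Nat.Coprime.prod_right fun p hp => by
    rw [Nat.Coprime, (ha p hp).gcd_eq]
    exact Nat.Coprime.pow_right _ ((Nat.Prime.coprime_iff_not_dvd (hP p hp)).2 (hr p hp)).symm
  obtain ⟨q, -, hq, hqa⟩ := Nat.forall_exists_prime_gt_and_modEq 0 (prod_ne_zero_iff.2 hne) haM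
  exact ⟨q, hq, fun p hp => (hqa.of_dvd (dvd_prod_of_mem _ hp)).trans (ha p hp)⟩

lemma exists_prime_forall_eq_sign {P : Finset ℕ} (hP : ∀ p ∈ P, p.Prime) {f : ℕ → ℕ → ℤ}
    (hf : ∀ p ∈ P, IsLocalQuadraticChar p (f p)) {t : ℕ → ℤ}
    (ht : ∀ p ∈ P, t p = 1 ∨ t p = -1) : ∃ q, q.Prime ∧ ∀ p ∈ P, f p q = t p := by
  choose! e he using fun p hp => (hf p hp).exists_periodic
  have hres : ∀ p ∈ P, ∃ r, ¬ p ∣ r ∧ f p r = t p := by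
    intro p hp
    rcases ht p hp with h | h
    · exact ⟨1, (hP p hp).not_dvd_one, by rw [h, (hf p hp).map_one]⟩
    · exact h ▸ (hf p hp).exists_eq_neg_one
  choose! r hr hrt using hres
  obtain ⟨q, hq, hqr⟩ := exists_prime_modEq_forall hP e r hr
  exact ⟨q, hq, fun p hp => (he p hp q (r p) (hqr p hp)).trans (hrt p hp)⟩

section Walsh

variable {α R : Type*} [DecidableEq α] [CommRing R]

def walsh (P : Finset α) (A : Finset α → R) (E : Finset α) : R :=
  ∑ S ∈ P.powerset, A S * (-1) ^ #(S ∩ E)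

lemma neg_one_pow_card_inter (S E : Finset α) :
    ((-1 : R)) ^ #(S ∩ E) = ∏ p ∈ E, if p ∈ S then -1 else 1 := by
  rw [prod_ite_mem, prod_const, inter_comm]

lemma sum_powerset_neg_one_pow_mul {P S T : Finset α} (hS : S ⊆ P) (hT : T ⊆ P) :
    ∑ E ∈ P.powerset, ((-1 : R)) ^ #(S ∩ E) * (-1) ^ #(T ∩ E)
      = if S = T then 2 ^ #P else 0 := by
  simp only [neg_one_pow_card_inter, ← prod_mul_distrib, ← prod_add_one]
  split_ifs with hST
  · subst hST
    rw [← prod_const]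
    refine prod_congr rfl fun p _ => ?_
    split_ifs <;> norm_num
  · obtain ⟨p, hp⟩ : ∃ p, ¬ (p ∈ S ↔ p ∈ T) := by
      by_contra! h
      exact hST (Finset.ext h)
    by_cases hpS : p ∈ S
    · exact prod_eq_zero (hS hpS) (by simp_all)
    · exact prod_eq_zero (hT (show p ∈ T by tauto)) (by simp_all)

lemma sum_powerset_neg_one_pow_mul_walsh {P S : Finset α} (hS : S ⊆ P) (A : Finset α → R) :
    ∑ E ∈ P.powerset, (-1) ^ #(S ∩ E) * walsh P A E = 2 ^ #P * A S := by
  simp only [walsh, mul_sum]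
  rw [sum_comm]
  have hterm : ∀ T ∈ P.powerset, ∑ E ∈ P.powerset, (-1) ^ #(S ∩ E) * (A T * (-1) ^ #(T ∩ E))
      = if T = S then 2 ^ #P * A T else 0 := by
    intro T hT
    simp only [mul_left_comm _ (A T), ← mul_sum,
      sum_powerset_neg_one_pow_mul hS (mem_powerset.1 hT), eq_comm (a := S)]
    split_ifs <;> ring
  rw [sum_congr rfl hterm, sum_ite_eq' P.powerset S, if_pos (mem_powerset.2 hS)]

lemma two_pow_card_mul_eq_walsh_empty {P : Finset α} {A : Finset α → R}
    (hA : ∀ E ⊆ P, E.Nonempty → walsh P A E = 0) {S : Finset α} (hS : S ⊆ P) :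
    2 ^ #P * A S = walsh P A ∅ := by
  rw [← sum_powerset_neg_one_pow_mul_walsh hS, sum_eq_single_of_mem ∅ (empty_mem_powerset P)]
  · simp
  · intro E hE hE0
    rw [hA E (mem_powerset.1 hE) (nonempty_iff_ne_empty.2 hE0), mul_zero]

end Walsh

def primesPart (N : ℤ) (S : Finset ℕ) : ℕ := ∏ p ∈ S, p ^ N.natAbs.factorization p

section PrimesPart

variable {N : ℤ} {S : Finset ℕ}

lemma Npart_eq_primesPart (m : ℕ) :
    Npart N m = primesPart N (N.natAbs.primeFactors ∩ m.primeFactors) := rfl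

lemma primesPart_ne_zero (hS : S ⊆ N.natAbs.primeFactors) : primesPart N S ≠ 0 :=
  prod_ne_zero_iff.2 fun _ hp => pow_ne_zero _ (Nat.prime_of_mem_primeFactors (hS hp)).ne_zero

lemma primeFactors_primesPart (hS : S ⊆ N.natAbs.primeFactors) :
    (primesPart N S).primeFactors = S := by
  ext p
  rw [Nat.mem_primeFactors_of_ne_zero (primesPart_ne_zero hS)]
  constructor
  · rintro ⟨hp, hdvd⟩
    obtain ⟨q, hq, hpq⟩ := (Prime.dvd_finsetProd_iff hp.prime _).1 hdvd
    rwa [(Nat.prime_dvd_prime_iff_eq hp (Nat.prime_of_mem_primeFactors (hS hq))).1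
      (hp.dvd_of_dvd_pow hpq)]
  · intro hp
    have hpN := hS hp
    refine ⟨Nat.prime_of_mem_primeFactors hpN, (dvd_pow_self p ?_).trans (dvd_prod_of_mem _ hp)⟩
    rwa [← Finsupp.mem_support_iff, Nat.support_factorization]

lemma primesPart_dvd (hS : S ⊆ N.natAbs.primeFactors) : primesPart N S ∣ N.natAbs := by
  rcases eq_or_ne N.natAbs 0 with hN | hN
  · exact hN ▸ dvd_zero _
  conv_rhs => rw [Nat.prod_primeFactors_pow_factorization hN]
  exact prod_dvd_prod_of_subset _ _ _ hS

end PrimesPart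

lemma sum_filter_Npart_eq_sum_powerset {M : Type*} [AddCommMonoid M] {N : ℤ} (hN : 0 < N)
    (f : ℕ → M) :
    ∑ m ∈ N.toNat.divisors.filter (fun m => Npart N m = m), f m
      = ∑ S ∈ N.natAbs.primeFactors.powerset, f (primesPart N S) := by
  have hNabs : N.toNat = N.natAbs := by omega
  have hsub : ∀ m ∈ N.toNat.divisors.filter (fun m => Npart N m = m),
      m.primeFactors ⊆ N.natAbs.primeFactors ∧ primesPart N m.primeFactors = m := by
    intro m hm
    rw [mem_filter, Nat.mem_divisors, hNabs] at hm
    have hmN := Nat.primeFactors_mono hm.1.1 hm.1.2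
    refine ⟨hmN, ?_⟩
    rw [← inter_eq_right.2 hmN, ← Npart_eq_primesPart, hm.2]
  refine sum_nbij' (·.primeFactors) (primesPart N) (fun m hm => mem_powerset.2 (hsub m hm).1)
    (fun S hS => ?_) (fun m hm => (hsub m hm).2)
    (fun S hS => primeFactors_primesPart (mem_powerset.1 hS)) (fun m hm => by rw [(hsub m hm).2])
  have hS' := mem_powerset.1 hS
  rw [mem_filter, Nat.mem_divisors, hNabs, Npart_eq_primesPart, primeFactors_primesPart hS',
    inter_eq_right.2 hS']
  exact ⟨⟨primesPart_dvd hS', by omega⟩, rfl⟩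

def eisComb (N k : ℤ) (L : ℂ) (a : Finset ℕ → ℂ) (n : ℕ) : ℂ :=
  ∑ S ∈ N.natAbs.primeFactors.powerset, a S * EmCoeff N k L (primesPart N S) n

lemma mem_EisSet_iff {N : ℤ} (hN : 0 < N) {k : ℤ} {L : ℂ}
    {δ : {p : ℕ // p ∈ N.natAbs.primeFactors} → Bool} {g : ℕ → ℂ} :
    g ∈ EisSet N k L δ ↔ (∃ a, g = eisComb N k L a) ∧ DeltaCond N δ g := by
  simp only [EisSet, Set.mem_ofPred_eq, sum_filter_Npart_eq_sum_powerset hN]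
  refine and_congr_left fun _ => ⟨fun ⟨c, hc⟩ => ⟨fun S => c (primesPart N S), hc⟩,
    fun ⟨a, ha⟩ => ⟨fun m => a m.primeFactors, ha.trans ?_⟩⟩
  funext n
  exact sum_congr rfl fun S hS => by simp only [primeFactors_primesPart (mem_powerset.1 hS)]

section Coefficients

variable {N k : ℤ} {L : ℂ}

lemma EmCoeff_primesPart {S : Finset ℕ} (hS : S ⊆ N.natAbs.primeFactors) {n : ℕ} (hn : n ≠ 0) :
    EmCoeff N k L (primesPart N S) n = 2 * ∑ d ∈ n.divisors,
      (∏ p ∈ S, (chiP N p (n / d : ℕ) : ℂ)) *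
        (∏ p ∈ N.natAbs.primeFactors \ S, (chiP N p d : ℂ)) * (d : ℂ) ^ (k - 1) := by
  simp only [EmCoeff, if_neg hn, chiPart, chiCoPart, primeFactors_primesPart hS, Int.cast_prod]

lemma eisComb_prod_apply (w : ℕ → ℂ) {n : ℕ} (hn : n ≠ 0) :
    eisComb N k L (fun S => ∏ p ∈ S, w p) n = 2 * ∑ d ∈ n.divisors, (d : ℂ) ^ (k - 1) *
      ∏ p ∈ N.natAbs.primeFactors, ((chiP N p d : ℂ) + w p * chiP N p (n / d : ℕ)) := by
  calc eisComb N k L (fun S => ∏ p ∈ S, w p) n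
      = ∑ S ∈ N.natAbs.primeFactors.powerset, ∑ d ∈ n.divisors, 2 * ((d : ℂ) ^ (k - 1) *
          ((∏ p ∈ S, w p * chiP N p (n / d : ℕ)) *
            ∏ p ∈ N.natAbs.primeFactors \ S, (chiP N p d : ℂ))) := by
        refine sum_congr rfl fun S hS => ?_
        rw [EmCoeff_primesPart (mem_powerset.1 hS) hn, mul_sum, mul_sum]
        refine sum_congr rfl fun d _ => ?_
        rw [prod_mul_distrib]
        ring
    _ = _ := by
        rw [sum_comm, mul_sum]
        refine sum_congr rfl fun d _ => ?_
        rw [← mul_sum, ← mul_sum]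
        simp only [add_comm (chiP N _ _ : ℂ), prod_add]

end Coefficients

lemma prod_sign_mul_self {ι : Type*} {S : Finset ι} {t : ι → ℤ} (ht : ∀ p ∈ S, t p = 1 ∨ t p = -1) :
    (∏ p ∈ S, (t p : ℂ)) * ∏ p ∈ S, (t p : ℂ) = 1 := by
  rw [← prod_mul_distrib]
  exact prod_eq_one fun p hp => by rcases ht p hp with h | h <;> simp [h]

lemma eisComb_apply_prime {N k : ℤ} {L : ℂ} (hfund : IsFundDisc N) {t : ℕ → ℤ}
    (ht : ∀ p ∈ N.natAbs.primeFactors, t p = 1 ∨ t p = -1) {q : ℕ} (hq : q.Prime)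
    (hqt : ∀ p ∈ N.natAbs.primeFactors, chiP N p q = t p) (a : Finset ℕ → ℂ) :
    eisComb N k L a q = 2 * (1 + (∏ p ∈ N.natAbs.primeFactors, (t p : ℂ)) * (q : ℂ) ^ (k - 1)) *
      ∑ S ∈ N.natAbs.primeFactors.powerset, a S * ∏ p ∈ S, (t p : ℂ) := by
  have hone : ∀ T ⊆ N.natAbs.primeFactors, ∏ p ∈ T, (chiP N p ((1 : ℕ) : ℤ) : ℂ) = 1 :=
    fun T hT => prod_eq_one fun p hp => by
      rw [(isLocalQuadraticChar_chiP hfund (hT hp)).map_one, Int.cast_one]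
  have hqt' : ∀ T ⊆ N.natAbs.primeFactors, ∏ p ∈ T, (chiP N p q : ℂ) = ∏ p ∈ T, (t p : ℂ) :=
    fun T hT => prod_congr rfl fun p hp => by rw [hqt p (hT hp)]
  rw [eisComb, mul_sum]
  refine sum_congr rfl fun S hS => ?_
  have hS' := mem_powerset.1 hS
  have hcompl : ∏ p ∈ N.natAbs.primeFactors \ S, (t p : ℂ)
      = (∏ p ∈ N.natAbs.primeFactors, (t p : ℂ)) * ∏ p ∈ S, (t p : ℂ) := by
    rw [← prod_sdiff hS', mul_assoc, prod_sign_mul_self (fun p hp => ht p (hS' hp)), mul_one]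
  rw [EmCoeff_primesPart hS' hq.ne_zero, hq.divisors, sum_pair hq.one_lt.ne, Nat.div_one,
    Nat.div_self hq.pos, hone S hS', hone _ sdiff_subset, hqt' S hS', hqt' _ sdiff_subset, hcompl,
    Nat.cast_one, one_zpow]
  ring

lemma one_add_mul_zpow_ne_zero {q : ℕ} (hq : 1 < q) {j : ℤ} (hj : j ≠ 0) {ε : ℂ}
    (hε : ε * ε = 1) : 1 + ε * (q : ℂ) ^ j ≠ 0 := by
  intro h
  have hsq : (q : ℝ) ^ j * (q : ℝ) ^ j = 1 := by
    have : (q : ℂ) ^ j * (q : ℂ) ^ j = 1 := by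
      linear_combination (ε * (q : ℂ) ^ j - 1) * h - ((q : ℂ) ^ j) ^ 2 * hε
    exact Complex.ofReal_injective (by push_cast; exact this)
  rcases mul_self_eq_one_iff.1 hsq with h1 | h1
  · exact hj ((zpow_eq_one_iff_right₀ (by positivity) (by exact_mod_cast hq.ne')).1 h1)
  · linarith [zpow_pos (by positivity : (0 : ℝ) < q) j]

lemma exists_prime_eisComb_apply {N k : ℤ} {L : ℂ} (hfund : IsFundDisc N) (hk : k ≠ 1)
    {t : ℕ → ℤ} (ht : ∀ p ∈ N.natAbs.primeFactors, t p = 1 ∨ t p = -1) :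
    ∃ q : ℕ, (∀ p ∈ N.natAbs.primeFactors, chiP N p q = t p) ∧ ∃ u ≠ 0, ∀ a,
      eisComb N k L a q = u * ∑ S ∈ N.natAbs.primeFactors.powerset, a S * ∏ p ∈ S, (t p : ℂ) := by
  obtain ⟨q, hq, hqt⟩ := exists_prime_forall_eq_sign (fun p => Nat.prime_of_mem_primeFactors)
    (fun p hp => isLocalQuadraticChar_chiP hfund hp) ht
  refine ⟨q, hqt, _, mul_ne_zero two_ne_zero ?_, eisComb_apply_prime hfund ht hq hqt⟩
  exact one_add_mul_zpow_ne_zero hq.one_lt (sub_ne_zero.2 hk) (prod_sign_mul_self ht)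

def deltaSign (N : ℤ) (δ : {p : ℕ // p ∈ N.natAbs.primeFactors} → Bool) (p : ℕ) : ℤ :=
  if h : p ∈ N.natAbs.primeFactors then (if δ ⟨p, h⟩ then 1 else -1) else 1

section DeltaSign

variable {N : ℤ} {δ : {p : ℕ // p ∈ N.natAbs.primeFactors} → Bool}

lemma deltaSign_eq_one_or_neg_one (p : ℕ) : deltaSign N δ p = 1 ∨ deltaSign N δ p = -1 := by
  unfold deltaSign
  split_ifs <;> simp

lemma deltaCond_iff {g : ℕ → ℂ} :
    DeltaCond N δ g ↔
      ∀ n : ℕ, ∀ p ∈ N.natAbs.primeFactors, chiP N p n = -deltaSign N δ p → g n = 0 := by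
  refine ⟨fun h n p hp hχ => h n ⟨⟨p, hp⟩, by rwa [deltaSign, dif_pos hp] at hχ⟩,
    fun h n ⟨⟨p, hp⟩, hχ⟩ => h n p hp (by rwa [deltaSign, dif_pos hp])⟩

end DeltaSign

def eisDelta (N k : ℤ) (L : ℂ) (δ : {p : ℕ // p ∈ N.natAbs.primeFactors} → Bool) : ℕ → ℂ :=
  eisComb N k L fun S => ∏ p ∈ S, (deltaSign N δ p : ℂ)

section EisDelta

variable {N k : ℤ} {L : ℂ} {δ : {p : ℕ // p ∈ N.natAbs.primeFactors} → Bool}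

lemma deltaCond_eisDelta (hfund : IsFundDisc N) : DeltaCond N δ (eisDelta N k L δ) := by
  rw [deltaCond_iff]
  intro n p hp hχ
  have hf := isLocalQuadraticChar_chiP hfund hp
  rcases eq_or_ne n 0 with rfl | hn
  · have h0 : chiP N p 0 = 0 := by simpa using hf.eq_zero_of_dvd 0 (dvd_zero p)
    rcases deltaSign_eq_one_or_neg_one (δ := δ) p with h | h <;> simp [h0, h] at hχ
  refine (eisComb_prod_apply _ hn).trans (mul_eq_zero_of_right _ (sum_eq_zero fun d hd => ?_))
  refine mul_eq_zero_of_right _ (prod_eq_zero hp ?_)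
  exact_mod_cast hf.add_mul_div_eq_zero (deltaSign_eq_one_or_neg_one p)
    (Nat.dvd_of_mem_divisors hd) hχ

lemma eisDelta_ne_zero (hfund : IsFundDisc N) (hk : k ≠ 1) : eisDelta N k L δ ≠ 0 := by
  obtain ⟨q, -, u, hu, hq⟩ :=
    exists_prime_eisComb_apply (L := L) hfund hk fun p _ => deltaSign_eq_one_or_neg_one (δ := δ) p
  intro h
  have hq0 := congrFun h q
  rw [Pi.zero_apply, eisDelta, hq,
    sum_congr rfl fun S _ => prod_sign_mul_self fun p _ => deltaSign_eq_one_or_neg_one p] at hq0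
  simp [hu] at hq0

lemma walsh_eq_zero_of_deltaCond (hfund : IsFundDisc N) (hk : k ≠ 1) {a : Finset ℕ → ℂ}
    (ha : DeltaCond N δ (eisComb N k L a)) {E : Finset ℕ} (hE : E ⊆ N.natAbs.primeFactors)
    (hE0 : E.Nonempty) :
    walsh N.natAbs.primeFactors (fun S => a S * ∏ p ∈ S, (deltaSign N δ p : ℂ)) E = 0 := by
  obtain ⟨p₀, hp₀⟩ := hE0
  set t : ℕ → ℤ := fun p => deltaSign N δ p * if p ∈ E then -1 else 1
  have ht : ∀ p ∈ N.natAbs.primeFactors, t p = 1 ∨ t p = -1 := fun p _ => by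
    rcases deltaSign_eq_one_or_neg_one (δ := δ) p with h | h <;> by_cases hpE : p ∈ E <;>
      simp [t, h, hpE]
  obtain ⟨q, hqt, u, hu, hq⟩ := exists_prime_eisComb_apply (L := L) hfund hk ht
  have hq0 := deltaCond_iff.1 ha q p₀ (hE hp₀) (by rw [hqt p₀ (hE hp₀)]; simp [t, hp₀])
  rw [hq, mul_eq_zero, or_iff_right hu] at hq0
  rw [← hq0, walsh]
  refine sum_congr rfl fun S _ => ?_
  simp only [t, Int.cast_mul, prod_mul_distrib, mul_assoc]
  push_cast
  rw [prod_ite_mem, prod_const]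

lemma exists_eq_smul_eisDelta (hfund : IsFundDisc N) (hk : k ≠ 1) {a : Finset ℕ → ℂ}
    (ha : DeltaCond N δ (eisComb N k L a)) : ∃ c : ℂ, eisComb N k L a = c • eisDelta N k L δ := by
  set A : Finset ℕ → ℂ := fun S => a S * ∏ p ∈ S, (deltaSign N δ p : ℂ)
  refine ⟨walsh N.natAbs.primeFactors A ∅ / 2 ^ #N.natAbs.primeFactors, funext fun n => ?_⟩
  simp only [eisDelta, eisComb, Pi.smul_apply, smul_eq_mul, mul_sum]
  refine sum_congr rfl fun S hS => ?_
  have hAS := two_pow_card_mul_eq_walsh_empty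
    (fun E hE hE0 => walsh_eq_zero_of_deltaCond hfund hk ha hE hE0) (mem_powerset.1 hS)
  have haS : a S = A S * ∏ p ∈ S, (deltaSign N δ p : ℂ) := by
    rw [mul_assoc, prod_sign_mul_self fun p _ => deltaSign_eq_one_or_neg_one p, mul_one]
  rw [haS, ← hAS, mul_div_cancel_left₀ _ (pow_ne_zero _ two_ne_zero)]
  ring

end EisDelta

theorem stmt15_general (N : ℤ) [NeZero N.toNat] (hfund : IsFundDisc N) (k : ℤ) (hk : 2 ≤ k)
    (χ : DirichletCharacter ℂ N.toNat)
    (δ : {p : ℕ // p ∈ N.natAbs.primeFactors} → Bool) :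
    ∃ g₀ ∈ EisSet N k (DirichletCharacter.LFunction χ ((1 : ℂ) - (k : ℂ))) δ,
      g₀ ≠ 0 ∧
      ∀ g ∈ EisSet N k (DirichletCharacter.LFunction χ ((1 : ℂ) - (k : ℂ))) δ,
        ∃ c : ℂ, g = c • g₀ := by
  have hN : 0 < N := by have := NeZero.ne N.toNat; omega
  have hk1 : k ≠ 1 := by omega
  refine ⟨eisDelta N k _ δ, mem_EisSet_iff hN |>.2 ⟨⟨_, rfl⟩, deltaCond_eisDelta hfund⟩,
    eisDelta_ne_zero hfund hk1, fun g hg => ?_⟩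
  obtain ⟨⟨a, rfl⟩, hδ⟩ := mem_EisSet_iff hN |>.1 hg
  exact exists_eq_smul_eisDelta hfund hk1 hδ

/-- for every even weight `k ≥ 2`, fundamental discriminant `N > 1` with
character `χ_D = (N/·)`, and sign vector `δ`, the space of Eisenstein series in
`M(N, k, χ_D)` satisfying the `δ`-condition is exactly one-dimensional. -/
theorem stmt15 (N : ℤ) [NeZero N.toNat] (hN : 1 < N) (hfund : IsFundDisc N) (k : ℤ) (hk : 2 ≤ k)
    (hkeven : Even k)
    (χ : DirichletCharacter ℂ N.toNat)
    (hχ : ∀ n : ℤ, χ ((n : ZMod N.toNat)) = (kron N n : ℂ))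
    (δ : {p : ℕ // p ∈ N.natAbs.primeFactors} → Bool) :
    ∃ g₀ ∈ EisSet N k (DirichletCharacter.LFunction χ ((1 : ℂ) - (k : ℂ))) δ,
      g₀ ≠ 0 ∧
      ∀ g ∈ EisSet N k (DirichletCharacter.LFunction χ ((1 : ℂ) - (k : ℂ))) δ,
        ∃ c : ℂ, g = c • g₀ :=
  stmt15_general N hfund k hk χ δ
end
end
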